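/- Let p be a prime and let c ∈ Z(SU(p)) with c ≠ 1. If x, y ∈ SU(p) satisfy [x,y] = c, then the centralizer of the pair, Z_{SU(p)}(x,y) = {g ∈ SU(p) : gx = xg and gy = yg}, equals the center Z(SU(p)). -/

import Mathlib

/-!
Common setup: the special unitary group `SU(p)`, the central product
`G_{m,p} = SU(p)^m / Δ(Z/p)`, the space `Hom(Z^n, G)` of commuting `n`-tuples,
and the moduli space `Rep(Z^n, G) = Hom(Z^n, G)/G`.
-/

/-- The special unitary group `SU(p)`: the subgroup of the unitary group of `p × p`
complex matrices consisting of the matrices of determinant `1`. -/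
def SUgrp (p : ℕ) : Subgroup (Matrix.unitaryGroup (Fin p) ℂ) :=
  MonoidHom.ker (Matrix.detMonoidHom.comp (Matrix.unitaryGroup (Fin p) ℂ).subtype)

/-- `SU p` as a topological group (topologized as a subspace of the matrices). -/
abbrev SU (p : ℕ) : Type := SUgrp p

/-- The underlying `p × p` complex matrix of an element of `SU p`. -/
noncomputable def SU.mat {p : ℕ} (x : SU p) : Matrix (Fin p) (Fin p) ℂ :=
  ((x : Matrix.unitaryGroup (Fin p) ℂ) : Matrix (Fin p) (Fin p) ℂ)

/-- The diagonal embedding of a group into an `m`-fold product. -/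
def diagHom (G : Type*) [Group G] (m : ℕ) : G →* (Fin m → G) where
  toFun g := fun _ => g
  map_one' := rfl
  map_mul' _ _ := rfl

/-- The diagonal central subgroup `Δ(Z/p) ⊆ SU(p)^m`, consisting of the constant tuples
`(z, ..., z)` with `z` in the center of `SU(p)`. -/
def DeltaZp (p m : ℕ) : Subgroup (Fin m → SU p) :=
  (Subgroup.center (SU p)).map (diagHom (SU p) m)

instance DeltaZp.normal (p m : ℕ) : (DeltaZp p m).Normal := by
  constructor
  intro x hx g
  obtain ⟨z, hz, rfl⟩ := hx
  refine ⟨z, hz, ?_⟩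
  funext i
  simp only [diagHom, MonoidHom.coe_mk, OneHom.coe_mk, Pi.mul_apply, Pi.inv_apply]
  rw [SetLike.mem_coe, Subgroup.mem_center_iff] at hz
  rw [hz (g i), mul_assoc, mul_inv_cancel, mul_one]

/-- The central product `G_{m,p} = SU(p)^m / Δ(Z/p)`, a topological group with the
quotient topology. -/
abbrev Gmp (p m : ℕ) : Type := (Fin m → SU p) ⧸ DeltaZp p m

/-- `Hom(Z^n, G)`: the space of commuting `n`-tuples in `G`, topologized as a subspace
of `G^n`. -/
def commTuples (G : Type*) [Group G] (n : ℕ) : Set (Fin n → G) :=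
  {f | ∀ i j, Commute (f i) (f j)}

/-- The trivial commuting tuple `(1, ..., 1)`. -/
def trivTuple (G : Type*) [Group G] (n : ℕ) : commTuples G n :=
  ⟨fun _ => 1, fun _ _ => Commute.one_left 1⟩

/-- The simultaneous-conjugation equivalence relation on the space of commuting
`n`-tuples in `G`. -/
def conjSetoid (G : Type*) [Group G] (n : ℕ) : Setoid (commTuples G n) where
  r x y := ∃ g : G, ∀ i, (y : Fin n → G) i = g * (x : Fin n → G) i * g⁻¹
  iseqv := by
    constructor
    · exact fun x => ⟨1, fun i => by group⟩
    · rintro x y ⟨g, hg⟩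
      exact ⟨g⁻¹, fun i => by rw [hg i]; group⟩
    · rintro x y z ⟨g, hg⟩ ⟨h, hh⟩
      exact ⟨h * g, fun i => by rw [hh i, hg i]; group⟩

/-- `Rep(Z^n, G) = Hom(Z^n, G)/G`: the quotient of the space of commuting `n`-tuples by
simultaneous conjugation, with the quotient topology. -/
abbrev RepSpace (G : Type*) [Group G] [TopologicalSpace G] (n : ℕ) : Type _ :=
  Quotient (conjSetoid G n)

/-- `N(n,m,p) = p^((m-1)(n-2))·(p^n − 1)·(p^(n-1) − 1)/(p² − 1) + 1` (the division is exact). -/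
def Ncomp (n m p : ℕ) : ℕ :=
  p ^ ((m - 1) * (n - 2)) * (p ^ n - 1) * (p ^ (n - 1) - 1) / (p ^ 2 - 1) + 1

/-!
As matrices, `⁅x, y⁆ = c` reads `x y = ζ y x`, where `c = ζ • 1` and `ζ` is a primitive `p`-th
root of unity (`c` is a nontrivial scalar of determinant `1`). If `v` is an eigenvector of `x`
with eigenvalue `μ`, then `y ^ k v` is an eigenvector with eigenvalue `ζ ^ k μ`; these `p`
eigenvalues are distinct, so the `y ^ k v` form a basis. Hence the only nonzero subspace invariant
under `x` and `y` is the whole space, and by Schur's lemma everything commuting with `x` and `y`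
is scalar. Central elements of `SU(p)` are scalar because, after rescaling by a root of `-1`, they
commute with the coordinate reflections and transpositions, hence with all matrix units.
-/

open Module Set Submodule

namespace Module.End

variable {K V : Type*} [Field K] [AddCommGroup V] [Module K V]
  {X Y : End K V} {ζ μ : K} {v : V}

theorem HasEigenvector.pow_apply_of_mul_eq_smul_mul (hXY : X * Y = ζ • (Y * X))
    (hY : Function.Injective Y) (hv : X.HasEigenvector μ v) (k : ℕ) :
    X.HasEigenvector (ζ ^ k * μ) ((Y ^ k) v) := by
  induction k with
  | zero => simpa using hv
  | succ k ih =>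
    refine hasEigenvector_iff.2 ⟨?_, ?_⟩
    · rw [mem_eigenspace_iff, pow_succ', mul_apply, ← mul_apply X, hXY, LinearMap.smul_apply,
        mul_apply, ih.apply_eq_smul, map_smul, smul_smul, pow_succ']
      ring_nf
    · rw [pow_succ', mul_apply]
      exact (injective_iff_map_eq_zero' Y).1 hY _ |>.not.2 ih.2

variable [FiniteDimensional K V]

theorem span_range_pow_apply_eq_top_of_mul_eq_smul_mul (hζ : IsPrimitiveRoot ζ (finrank K V))
    (hXY : X * Y = ζ • (Y * X)) (hX : Function.Injective X) (hY : Function.Injective Y)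
    (hv : X.HasEigenvector μ v) :
    span K (range fun k : Fin (finrank K V) ↦ (Y ^ (k : ℕ)) v) = ⊤ := by
  have hμ : μ ≠ 0 := by
    rintro rfl
    exact hv.2 (hX (by rw [hv.apply_eq_smul, zero_smul, map_zero]))
  have hinj : Function.Injective fun k : Fin (finrank K V) ↦ ζ ^ (k : ℕ) * μ :=
    fun i j hij ↦ Fin.ext (hζ.pow_inj i.2 j.2 (mul_right_cancel₀ hμ hij))
  refine LinearIndependent.span_eq_top_of_card_eq_finrank' ?_ (Fintype.card_fin _)
  exact X.eigenvectors_linearIndependent' _ hinj _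
    fun k ↦ hv.pow_apply_of_mul_eq_smul_mul hXY hY k

variable [IsAlgClosed K]

theorem eq_top_of_mapsTo_of_mul_eq_smul_mul (hζ : IsPrimitiveRoot ζ (finrank K V))
    (hXY : X * Y = ζ • (Y * X)) (hX : Function.Injective X) (hY : Function.Injective Y)
    {W : Submodule K V} (hW : W ≠ ⊥) (hXW : MapsTo X W W) (hYW : MapsTo Y W W) : W = ⊤ := by
  have : Nontrivial W := nontrivial_iff_ne_bot.2 hW
  obtain ⟨μ, hμ⟩ := exists_eigenvalue (X.restrict hXW)
  obtain ⟨w, hw⟩ := hμ.exists_hasEigenvector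
  have hv : X.HasEigenvector μ w :=
    hasEigenvector_iff.2 ⟨mem_eigenspace_iff.2 (congrArg Subtype.val hw.apply_eq_smul),
      by simpa using hw.2⟩
  have hpow (k : ℕ) : (Y ^ k) w ∈ W := by
    induction k with
    | zero => exact w.2
    | succ k ih => rw [pow_succ', mul_apply]; exact hYW ih
  rw [eq_top_iff, ← span_range_pow_apply_eq_top_of_mul_eq_smul_mul hζ hXY hX hY hv, span_le]
  rintro _ ⟨k, rfl⟩
  exact hpow k

theorem mem_range_algebraMap_of_commute_of_mul_eq_smul_mul {G : End K V}
    (hζ : IsPrimitiveRoot ζ (finrank K V)) (hXY : X * Y = ζ • (Y * X))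
    (hX : Function.Injective X) (hY : Function.Injective Y)
    (hGX : Commute G X) (hGY : Commute G Y) : G ∈ range (algebraMap K (End K V)) := by
  cases subsingleton_or_nontrivial V
  · exact ⟨0, Subsingleton.elim _ _⟩
  obtain ⟨a, ha⟩ := G.exists_eigenvalue
  have htop : G.eigenspace a = ⊤ := eq_top_of_mapsTo_of_mul_eq_smul_mul hζ hXY hX hY ha
    (mapsTo_genEigenspace_of_comm hGX a 1) (mapsTo_genEigenspace_of_comm hGY a 1)
  rw [eigenspace_def, LinearMap.ker_eq_top, sub_eq_zero] at htop
  exact ⟨a, htop.symm⟩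

end Module.End

namespace Matrix

theorem mem_range_scalar_of_commute_of_mul_eq_smul_mul {ι K : Type*} [Fintype ι] [DecidableEq ι]
    [Field K] [IsAlgClosed K] {X Y G : Matrix ι ι K} {ζ : K}
    (hζ : IsPrimitiveRoot ζ (Fintype.card ι)) (hX : IsUnit X) (hY : IsUnit Y)
    (hXY : X * Y = ζ • (Y * X)) (hGX : Commute G X) (hGY : Commute G Y) :
    G ∈ range (scalar ι) := by
  let e : Matrix ι ι K ≃ₐ[K] End K (ι → K) := toLinAlgEquiv'
  have hinj {A : Matrix ι ι K} (hA : IsUnit A) : Function.Injective (e A) :=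
    ((End.isUnit_iff _).1 (hA.map e)).1
  obtain ⟨a, ha⟩ := End.mem_range_algebraMap_of_commute_of_mul_eq_smul_mul
    (by rwa [finrank_fintype_fun_eq_card]) (by rw [← map_mul, hXY, map_smul, map_mul])
    (hinj hX) (hinj hY) (hGX.map e) (hGY.map e)
  refine ⟨a, e.injective ?_⟩
  rw [← ha, ← AlgEquiv.commutes e]
  rfl

end Matrix

namespace SU

variable {n : ℕ}

theorem mat_mul (a b : SU n) : (a * b).mat = a.mat * b.mat := rfl

theorem mat_injective : Function.Injective (SU.mat (p := n)) :=
  fun _ _ h ↦ Subtype.ext (Subtype.ext h)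

theorem isUnit_mat (a : SU n) : IsUnit a.mat :=
  ⟨⟨a.mat, a⁻¹.mat, by rw [← mat_mul, mul_inv_cancel]; rfl,
    by rw [← mat_mul, inv_mul_cancel]; rfl⟩, rfl⟩

/-- `exp (π i / n)` has modulus one and `n`-th power `-1`, so it rescales `U` into `SU n`. -/
theorem commute_mat_of_mem_center_of_det_eq_neg_one {z : SU n} (hz : z ∈ Subgroup.center (SU n))
    {U : Matrix (Fin n) (Fin n) ℂ} (hU : U ∈ Matrix.unitaryGroup (Fin n) ℂ) (hdet : U.det = -1) :
    Commute U z.mat := by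
  have hn : n ≠ 0 := by
    rintro rfl
    norm_num [Matrix.det_isEmpty] at hdet
  set s : ℂ := Complex.exp (↑(Real.pi / n) * Complex.I)
  have hs : s ∈ unitary ℂ := by
    rw [Unitary.mem_iff_star_mul_self, Complex.star_def, Complex.conj_mul',
      Complex.norm_exp_ofReal_mul_I, Complex.ofReal_one, one_pow]
  have hsn : s ^ n = -1 := by
    rw [← Complex.exp_nat_mul, ← Complex.exp_pi_mul_I]
    push_cast
    field_simp
  let u : SU n := ⟨⟨s • U, Unitary.smul_mem_of_mem hs hU⟩, by
    change (s • U).det = 1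
    rw [Matrix.det_smul, Fintype.card_fin, hsn, hdet, neg_one_mul, neg_neg]⟩
  exact (Commute.smul_left_iff₀ (Complex.exp_ne_zero _)).1
    (congrArg SU.mat (Subgroup.mem_center_iff.1 hz u))

theorem commute_single_mat_of_mem_center {z : SU n} (hz : z ∈ Subgroup.center (SU n))
    (i : Fin n) : Commute (Matrix.single i i 1) z.mat := by
  set d : Fin n → ℂ := 1 - Pi.single i 2
  have hdiag : Matrix.diagonal d = 1 - (2 : ℂ) • Matrix.single i i 1 := by
    rw [Matrix.smul_single, smul_eq_mul, mul_one, ← Matrix.diagonal_one,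
      ← Matrix.diagonal_single, Matrix.diagonal_sub]
    rfl
  have hU : Matrix.diagonal d ∈ Matrix.unitaryGroup (Fin n) ℂ := by
    rw [Matrix.mem_unitaryGroup_iff', Matrix.star_eq_conjTranspose,
      Matrix.diagonal_conjTranspose, Matrix.diagonal_mul_diagonal, ← Matrix.diagonal_one]
    congr 1
    ext k
    rcases eq_or_ne k i with rfl | hk <;> simp [d, *]
    norm_num
  have hdet : (Matrix.diagonal d).det = -1 := by
    rw [Matrix.det_diagonal, Finset.prod_eq_single i] <;> simp +contextual [d]
    norm_num
  have h := (Commute.one_left z.mat).sub_left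
    (commute_mat_of_mem_center_of_det_eq_neg_one hz hU hdet)
  rw [hdiag, sub_sub_cancel] at h
  exact (Commute.smul_left_iff₀ two_ne_zero).1 h

theorem commute_permMatrix_swap_mat_of_mem_center {z : SU n} (hz : z ∈ Subgroup.center (SU n))
    {i j : Fin n} (hij : i ≠ j) : Commute ((Equiv.swap i j).permMatrix ℂ) z.mat := by
  refine commute_mat_of_mem_center_of_det_eq_neg_one hz ?_ ?_
  · rw [Matrix.mem_unitaryGroup_iff', Matrix.star_eq_conjTranspose,
      Matrix.conjTranspose_permMatrix, ← Matrix.permMatrix_mul, mul_inv_cancel,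
      Matrix.permMatrix_one]
  · rw [Matrix.det_permutation, Equiv.Perm.sign_swap hij]
    norm_num

theorem mem_center_iff {z : SU n} :
    z ∈ Subgroup.center (SU n) ↔ z.mat ∈ range (Matrix.scalar (Fin n)) := by
  refine ⟨fun hz ↦ Matrix.mem_range_scalar_of_commute_single fun i j hij ↦ ?_, ?_⟩
  · have hsingle : Matrix.single i i (1 : ℂ) * (Equiv.swap i j).permMatrix ℂ =
        Matrix.single i j 1 := by
      ext a b
      rcases eq_or_ne a i with rfl | ha
      · simp [Equiv.Perm.permMatrix, Matrix.single_apply]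
      · simp [ha, Ne.symm ha]
    change Commute (Matrix.single i j 1) z.mat
    rw [← hsingle]
    exact (commute_single_mat_of_mem_center hz i).mul_left
      (commute_permMatrix_swap_mat_of_mem_center hz hij)
  · rintro ⟨r, hr⟩
    refine Subgroup.mem_center_iff.2 fun g ↦ mat_injective ?_
    rw [mat_mul, mat_mul, ← hr]
    exact (Matrix.scalar_commute r (Commute.all r) g.mat).symm.eq

theorem isPrimitiveRoot_of_mat_eq_scalar {p : ℕ} (hp : p.Prime) {c : SU p} (hc1 : c ≠ 1) {ζ : ℂ}
    (hζ : c.mat = Matrix.scalar (Fin p) ζ) : IsPrimitiveRoot ζ p := by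
  have : Fact p.Prime := ⟨hp⟩
  have hpow : ζ ^ p = 1 := by
    have hdet : c.mat.det = 1 := c.2
    rwa [hζ, Matrix.scalar_apply, Matrix.det_diagonal, Finset.prod_const, Finset.card_univ,
      Fintype.card_fin] at hdet
  have hne : ζ ≠ 1 := by
    rintro rfl
    exact hc1 (mat_injective (by rw [hζ, map_one]; rfl))
  simpa [orderOf_eq_prime hpow hne] using IsPrimitiveRoot.orderOf ζ

end SU

open scoped commutatorElement

/-- For a prime `p`, a nontrivial central element `c` of `SU(p)`, and `x, y ∈ SU(p)` with
`⁅x,y⁆ = c`, the centralizer of the pair `(x, y)` in `SU(p)` equals the center of `SU(p)`. -/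
theorem centralizer_pair_eq_center (p : ℕ) (hp : p.Prime)
    (c : SU p) (hc : c ∈ Subgroup.center (SU p)) (hc1 : c ≠ 1)
    (x y : SU p) (hxy : ⁅x, y⁆ = c) :
    {g : SU p | g * x = x * g ∧ g * y = y * g} = (Subgroup.center (SU p) : Set (SU p)) := by
  ext g
  refine ⟨fun ⟨hgx, hgy⟩ ↦ ?_, fun hg ↦ ?_⟩
  · obtain ⟨ζ, hζ⟩ := SU.mem_center_iff.1 hc
    have hrel : x * y = c * (y * x) := by rw [← hxy, commutatorElement_def]; group
    have hXY : x.mat * y.mat = ζ • (y.mat * x.mat) := by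
      rw [← SU.mat_mul, hrel, SU.mat_mul, ← hζ, Matrix.smul_eq_diagonal_mul]
      rfl
    refine SU.mem_center_iff.2 (Matrix.mem_range_scalar_of_commute_of_mul_eq_smul_mul ?_
      (SU.isUnit_mat x) (SU.isUnit_mat y) hXY (congrArg SU.mat hgx) (congrArg SU.mat hgy))
    rw [Fintype.card_fin]
    exact SU.isPrimitiveRoot_of_mat_eq_scalar hp hc1 hζ.symm
  · exact ⟨(Subgroup.mem_center_iff.1 hg x).symm, (Subgroup.mem_center_iff.1 hg y).symm⟩
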